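/- arXiv:1211.0106 — 3 statements merged into one kernel-verified Lean document; each statement's English description precedes it below -/
import Mathlib

section
/- The set A = {(z,w) ∈ ℂ² : w ≠ 0, z = e^{1/w}} ∪ {(z,w) : w = 0} is not a (complex) analytic subset of ℂ². -/
/-
Any function holomorphic near the origin that vanishes on `A` vanishes on a whole bidisk.
Indeed, for fixed `z ≠ 0` the slice `w ↦ f (z, w)` vanishes at the points
`w = 1 / (log z + 2πin)`, which accumulate at `0`, so it vanishes identically by the identity
theorem; a second application in the variable `z` handles `z = 0`. Hence the common zero set of
finitely many such functions contains points `(0, w)` with `w ≠ 0`, which are not in `A`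
because `exp` never vanishes.
-/

open Complex Metric Filter Topology Set

/-- A subset `S` of an open set `U ⊆ ℂ²` is an analytic subset if it is locally the
common zero set of finitely many holomorphic functions. -/
def IsAnalyticSubset (U S : Set (ℂ × ℂ)) : Prop :=
  ∀ x ∈ U, ∃ V : Set (ℂ × ℂ), IsOpen V ∧ x ∈ V ∧ V ⊆ U ∧
    ∃ (k : ℕ) (g : Fin k → (ℂ × ℂ) → ℂ),
      (∀ i, DifferentiableOn ℂ (g i) V) ∧
      S ∩ V = {y | y ∈ V ∧ ∀ i, g i y = 0}

theorem frequently_exp_one_div_eq {z : ℂ} (hz : z ≠ 0) :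
    ∃ᶠ w in 𝓝[≠] (0 : ℂ), exp (1 / w) = z := by
  set c : ℕ → ℂ := fun n => log z + n * (2 * Real.pi * I)
  have hc : Tendsto c atTop (Bornology.cobounded ℂ) :=
    (tendsto_const_add_cobounded _).comp <|
      (tendsto_mul_right_cobounded (by simp)).comp
        tendsto_natCast_atTop_cobounded
  refine (tendsto_inv₀_cobounded'.comp hc).frequently (Eventually.of_forall fun n => ?_).frequently
  simp only [Function.comp_apply, one_div, inv_inv, c, exp_add, exp_log hz,
    exp_nat_mul_two_pi_mul_I, mul_one]

section Slices

variable {𝕜 E F G : Type*} [NontriviallyNormedField 𝕜] [NormedAddCommGroup E] [NormedSpace 𝕜 E]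
  [NormedAddCommGroup F] [NormedSpace 𝕜 F] [NormedAddCommGroup G] [NormedSpace 𝕜 G]
  {f : E × F → G} {s : Set E} {t : Set F}

theorem DifferentiableOn.comp_prodMk_left (hf : DifferentiableOn 𝕜 f (s ×ˢ t)) {x : E}
    (hx : x ∈ s) : DifferentiableOn 𝕜 (fun y => f (x, y)) t :=
  hf.comp ((differentiable_const x).prodMk differentiable_id).differentiableOn
    fun _ hy => ⟨hx, hy⟩

theorem DifferentiableOn.comp_prodMk_right (hf : DifferentiableOn 𝕜 f (s ×ˢ t)) {y : F}
    (hy : y ∈ t) : DifferentiableOn 𝕜 (fun x => f (x, y)) s :=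
  hf.comp (differentiable_id.prodMk (differentiable_const y)).differentiableOn
    fun _ hx => ⟨hx, hy⟩

end Slices

theorem DifferentiableOn.eqOn_zero_ball_of_frequently_eq_zero {φ : ℂ → ℂ} {c : ℂ} {r : ℝ}
    (hφ : DifferentiableOn ℂ φ (ball c r)) (hr : 0 < r) (h : ∃ᶠ w in 𝓝[≠] c, φ w = 0) :
    EqOn φ 0 (ball c r) :=
  (hφ.analyticOnNhd isOpen_ball).eqOn_zero_of_preconnected_of_frequently_eq_zero
    (convex_ball c r).isPreconnected (mem_ball_self hr) h

theorem eqOn_zero_of_eq_zero_on_exp_one_div_graph {f : ℂ × ℂ → ℂ} {r : ℝ}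
    (hf : DifferentiableOn ℂ f (ball 0 r ×ˢ ball 0 r)) (hr : 0 < r)
    (hA : ∀ q ∈ ball 0 r ×ˢ ball 0 r, q.2 ≠ 0 → q.1 = exp (1 / q.2) → f q = 0) :
    EqOn f 0 (ball 0 r ×ˢ ball 0 r) := by
  have off_axis : ∀ z ∈ ball (0 : ℂ) r, z ≠ 0 → ∀ w ∈ ball (0 : ℂ) r, f (z, w) = 0 := by
    intro z hz hz0
    refine (hf.comp_prodMk_left hz).eqOn_zero_ball_of_frequently_eq_zero hr ?_
    refine ((frequently_exp_one_div_eq hz0).and_eventually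
      (Eventually.and (nhdsWithin_le_nhds (ball_mem_nhds 0 hr)) self_mem_nhdsWithin)).mono ?_
    rintro w ⟨hexp, hw, hw0⟩
    exact hA (z, w) ⟨hz, hw⟩ hw0 hexp.symm
  rintro ⟨z, w⟩ ⟨hz, hw⟩
  rcases eq_or_ne z 0 with rfl | hz0
  · refine (hf.comp_prodMk_right hw).eqOn_zero_ball_of_frequently_eq_zero hr ?_ hz
    refine Eventually.frequently ?_
    filter_upwards [nhdsWithin_le_nhds (ball_mem_nhds 0 hr), self_mem_nhdsWithin]
      with z hz hz0 using off_axis z hz hz0 w hw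
  · exact off_axis z hz hz0 w hw

/-- The set `A = {(z,w) : w ≠ 0, z = e^{1/w}} ∪ {w = 0}` is not an analytic subset
of `ℂ²`. -/
theorem stmt5 :
    ¬ IsAnalyticSubset Set.univ
      ({q : ℂ × ℂ | q.2 ≠ 0 ∧ q.1 = Complex.exp (1 / q.2)} ∪ {q : ℂ × ℂ | q.2 = 0}) := by
  intro h
  obtain ⟨V, hVo, h0V, -, k, g, hg, hAV⟩ := h (0, 0) trivial
  obtain ⟨r, hr, hrV⟩ := Metric.isOpen_iff.mp hVo _ h0V
  rw [← ball_prod_same] at hrV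
  have hzero : ∀ i, EqOn (g i) 0 (ball 0 r ×ˢ ball 0 r) := fun i =>
    eqOn_zero_of_eq_zero_on_exp_one_div_graph ((hg i).mono hrV) hr fun q hq hq2 hq1 =>
      (show q ∈ {y | y ∈ V ∧ ∀ i, g i y = 0} from hAV ▸ ⟨Or.inl ⟨hq2, hq1⟩, hrV hq⟩).2 i
  have hr2 : ((r / 2 : ℝ) : ℂ) ≠ 0 := by exact_mod_cast (half_pos hr).ne'
  have hp : ((0 : ℂ), ((r / 2 : ℝ) : ℂ)) ∈ ball 0 r ×ˢ ball 0 r :=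
    ⟨mem_ball_self hr, by simp [abs_of_pos hr, hr]⟩
  obtain ⟨hpA, -⟩ : ((0 : ℂ), ((r / 2 : ℝ) : ℂ)) ∈
      ({q : ℂ × ℂ | q.2 ≠ 0 ∧ q.1 = exp (1 / q.2)} ∪ {q : ℂ × ℂ | q.2 = 0}) ∩ V :=
    hAV ▸ ⟨hrV hp, fun i => hzero i hp⟩
  rcases hpA with ⟨-, hexp⟩ | hw0
  · exact exp_ne_zero _ hexp.symm
  · exact hr2 hw0
end

section
/- Let ν̄ : (0, r₀) → ℝ be a function and δ > 0 a constant such that for all 0 < r₁ < r₂ < r₀, ν̄(r₂) − ν̄(r₁) ≥ −(δ/r₁^{2p−1})(σ(r₂) − σ(r₁)) − δ(1/r₁^{2p} − 1/r₂^{2p}) r₂ σ(r₂), where σ(r) = r^{2p} ν̄(r). If ν̄ is differentiable, then (1+δr)^{4p} ν̄(r) is nondecreasing on (0, r₀') for some r₀' > 0; in particular ν̄(r) admits a (possibly infinite) limit as r → 0⁺. -/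
/-!
Fix `r` and write `σ s = s ^ n * ν s` with `n = 2p`. The hypothesis says exactly that
`F s = ν s + δ r^(1-n) (σ s - σ r) + δ (r^(-n) - s^(-n)) s σ s` satisfies `F r ≤ F s` for `s > r`,
so `0 ≤ F'(r) = (1 + δ r) ν'(r) + 2 n δ ν(r)`. Up to the positive factor `(1 + δ r)^(2n-1)` this
is the derivative of `(1 + δ r)^(2n) ν(r)`, which is therefore monotone; being nonnegative it has
a limit at `0⁺`, and dividing by `(1 + δ r)^(2n) → 1` so does `ν`.
-/

open Set Topology Filter

theorem HasDerivAt.nonneg_of_forall_le_right {F : ℝ → ℝ} {D r b : ℝ} (hF : HasDerivAt F D r)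
    (hrb : r < b) (hmin : ∀ s ∈ Ioo r b, F r ≤ F s) : 0 ≤ D := by
  have hloc : IsLocalMinOn F (Ici r) r :=
    mem_nhdsWithin.2 ⟨Iio b, isOpen_Iio, hrb, fun s ⟨hsb, hrs⟩ =>
      hrs.eq_or_lt.elim (fun h => by simp [h]) fun h => hmin s ⟨h, hsb⟩⟩
  have hone : (1 : ℝ) ∈ posTangentConeAt (Ici r) r :=
    mem_posTangentConeAt_of_segment_subset (by simp [segment_eq_Icc, Icc_subset_Ici_self])
  simpa using hloc.hasFDerivWithinAt_nonneg hF.hasFDerivAt.hasFDerivWithinAt hone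

theorem deriv_inequality_of_almost_monotone {n : ℕ} (hn : 1 ≤ n) {ν : ℝ → ℝ} {ν' δ r b : ℝ}
    (hr : 0 < r) (hrb : r < b) (hν : HasDerivAt ν ν' r)
    (h : ∀ s ∈ Ioo r b, -(δ / r ^ (n - 1)) * (s ^ n * ν s - r ^ n * ν r)
        - δ * (1 / r ^ n - 1 / s ^ n) * (s * (s ^ n * ν s)) ≤ ν s - ν r) :
    0 ≤ (1 + δ * r) * ν' + 2 * n * δ * ν r := by
  obtain ⟨k, rfl⟩ : ∃ k, n = k + 1 := ⟨n - 1, by omega⟩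
  simp only [Nat.add_sub_cancel] at h
  have hσ : HasDerivAt (fun s => s ^ (k + 1) * ν s)
      ((k + 1 : ℕ) * r ^ k * ν r + r ^ (k + 1) * ν') r := by
    simpa using (hasDerivAt_pow (k + 1) r).fun_mul hν
  have hw : HasDerivAt (fun s => 1 / r ^ (k + 1) - 1 / s ^ (k + 1))
      ((k + 1 : ℕ) * r ^ k / (r ^ (k + 1)) ^ 2) r := by
    simpa [neg_div] using
      ((hasDerivAt_pow (k + 1) r).fun_inv (by positivity)).const_sub (1 / r ^ (k + 1))
  have hF := (hν.fun_add (hσ.const_mul (δ / r ^ k))).fun_add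
    ((hw.fun_mul ((hasDerivAt_id' r).fun_mul hσ)).const_mul δ)
  have hD := hF.nonneg_of_forall_le_right hrb fun s hs => by
    have := h s hs
    simp only [sub_self, zero_mul, mul_zero, add_zero]
    linarith
  convert hD using 1
  field_simp
  push_cast
  ring

theorem monotoneOn_one_add_mul_pow_mul {ν : ℝ → ℝ} {δ b : ℝ} {m : ℕ} (hm : 1 ≤ m) (hδ : 0 ≤ δ)
    (hν : ∀ r ∈ Ioo 0 b, DifferentiableAt ℝ ν r)
    (h : ∀ r ∈ Ioo 0 b, 0 ≤ (1 + δ * r) * deriv ν r + m * δ * ν r) :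
    MonotoneOn (fun r => (1 + δ * r) ^ m * ν r) (Ioo 0 b) := by
  obtain ⟨k, rfl⟩ : ∃ k, m = k + 1 := ⟨m - 1, by omega⟩
  have hderiv (r : ℝ) (hr : r ∈ Ioo 0 b) : HasDerivAt (fun r => (1 + δ * r) ^ (k + 1) * ν r)
      ((1 + δ * r) ^ k * ((1 + δ * r) * deriv ν r + (k + 1 : ℕ) * δ * ν r)) r := by
    have hlin : HasDerivAt (fun r : ℝ => 1 + δ * r) δ r := by
      simpa using ((hasDerivAt_id r).const_mul δ).const_add 1
    refine ((hlin.fun_pow (k + 1)).fun_mul (hν r hr).hasDerivAt).congr_deriv ?_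
    rw [add_tsub_cancel_right]
    push_cast
    ring
  refine monotoneOn_of_deriv_nonneg (convex_Ioo 0 b)
    (fun r hr => (hderiv r hr).continuousAt.continuousWithinAt) ?_ ?_ <;> rw [interior_Ioo]
  · exact fun r hr => (hderiv r hr).differentiableAt.differentiableWithinAt
  · intro r hr
    rw [(hderiv r hr).deriv]
    exact mul_nonneg (pow_nonneg (by nlinarith [hr.1]) k) (h r hr)

theorem tendsto_of_tendsto_one_add_mul_pow_mul {ν : ℝ → ℝ} {δ L : ℝ} {m : ℕ} {l : Filter ℝ}
    (hl : l ≤ 𝓝 0) (h : Tendsto (fun r => (1 + δ * r) ^ m * ν r) l (𝓝 L)) :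
    Tendsto ν l (𝓝 L) := by
  have hc : Tendsto (fun r : ℝ => (1 + δ * r) ^ m) l (𝓝 1) := by
    have : Continuous fun r : ℝ => (1 + δ * r) ^ m := by fun_prop
    simpa using (this.tendsto 0).mono_left hl
  refine (by simpa using h.div hc one_ne_zero : Tendsto _ l (𝓝 L)).congr' ?_
  filter_upwards [hc.eventually_ne one_ne_zero] with r hr
  simp only [Pi.div_apply]
  field_simp

/-- Almost-monotonicity of the Lelong function: if `ν̄ : (0,r₀) → ℝ` (nonnegative,
differentiable) satisfies, with `σ(r) = r^{2p} ν̄(r)`, the inequality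
`ν̄(r₂) − ν̄(r₁) ≥ −(δ/r₁^{2p−1})(σ(r₂) − σ(r₁)) − δ(1/r₁^{2p} − 1/r₂^{2p}) r₂ σ(r₂)`
for all `0 < r₁ < r₂ < r₀`, then `(1+δr)^{4p} ν̄(r)` is nondecreasing on `(0,r₀')`
for some `r₀' > 0`; in particular `ν̄(r)` has a limit as `r → 0⁺`. -/
theorem stmt8 (p : ℕ) (hp : 1 ≤ p) (r₀ δ : ℝ) (hr₀ : 0 < r₀) (hδ : 0 < δ)
    (ν : ℝ → ℝ)
    (hnn : ∀ r ∈ Ioo (0:ℝ) r₀, 0 ≤ ν r)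
    (hdiff : ∀ r ∈ Ioo (0:ℝ) r₀, DifferentiableAt ℝ ν r)
    (hineq : ∀ r₁ r₂ : ℝ, 0 < r₁ → r₁ < r₂ → r₂ < r₀ →
      -(δ / r₁ ^ (2 * p - 1)) * (r₂ ^ (2 * p) * ν r₂ - r₁ ^ (2 * p) * ν r₁)
        - δ * (1 / r₁ ^ (2 * p) - 1 / r₂ ^ (2 * p)) * (r₂ * (r₂ ^ (2 * p) * ν r₂))
      ≤ ν r₂ - ν r₁) :
    (∃ r₀' > 0, MonotoneOn (fun r => (1 + δ * r) ^ (4 * p) * ν r) (Ioo (0:ℝ) r₀')) ∧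
    ∃ L : ℝ, Tendsto ν (nhdsWithin 0 (Ioi (0:ℝ))) (nhds L) := by
  have key (r : ℝ) (hr : r ∈ Ioo 0 r₀) :
      0 ≤ (1 + δ * r) * deriv ν r + (4 * p : ℕ) * δ * ν r := by
    have := deriv_inequality_of_almost_monotone (n := 2 * p) (by omega) hr.1 hr.2
      (hdiff r hr).hasDerivAt fun s hs => hineq r s hr.1 hs.1 hs.2
    push_cast at this ⊢
    linarith
  have hmono := monotoneOn_one_add_mul_pow_mul (by omega) hδ.le hdiff key
  have hbdd : BddBelow ((fun r => (1 + δ * r) ^ (4 * p) * ν r) '' Ioo 0 r₀) := by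
    refine ⟨0, ?_⟩
    rintro _ ⟨r, hr, rfl⟩
    exact mul_nonneg (pow_nonneg (by nlinarith [hr.1]) _) (hnn r hr)
  exact ⟨⟨r₀, hr₀, hmono⟩, _, tendsto_of_tendsto_one_add_mul_pow_mul nhdsWithin_le_nhds
    (hmono.tendsto_nhdsWithin_Ioo_right (nonempty_Ioo.2 hr₀) hbdd)⟩
end

section
/- Let ν̄, g : (0,r₀) → ℝ be differentiable with g nonnegative, nondecreasing, g(r) → 0 as r → 0⁺, and suppose (1+δr) ν̄'(r) + 4pδ ν̄(r) + g'(r) ≥ 0 on (0,r₀) for constants δ > 0 and integer p ≥ 1. Then the function r ↦ (1+δr)^{4p} ν̄(r) + (1+δr)^{4p−1} g(r) is nondecreasing near 0, and ν̄(r) admits a limit as r → 0⁺ equal to lim_{r→0⁺} (1+δr)^{4p} ν̄(r). -/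
/-!
With `u r = 1 + δ r`, the derivative of `F = u ^ n ν + u ^ (n - 1) g` is
`u ^ (n - 1) (u ν' + n δ ν + g') + (n - 1) δ u ^ (n - 2) g`: the first term is nonnegative by
the differential inequality and the second because `g ≥ 0`. So `F` is monotone, and being bounded
below it has a limit `L` at `0⁺`. As `u → 1` and `g → 0`, the term `u ^ (n - 1) g` vanishes in
the limit, so `u ^ n ν → L` and then `ν → L`.
-/

open Set Filter Topology

section OneAddMulPow

variable {δ : ℝ} {ν g : ℝ → ℝ}

theorem hasDerivAt_one_add_mul_pow_mul_add {r : ℝ} (m : ℕ) (hν : DifferentiableAt ℝ ν r)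
    (hg : DifferentiableAt ℝ g r) :
    HasDerivAt (fun r => (1 + δ * r) ^ (m + 1) * ν r + (1 + δ * r) ^ m * g r)
      ((1 + δ * r) ^ m * ((1 + δ * r) * deriv ν r + (m + 1) * δ * ν r + deriv g r)
        + m * δ * (1 + δ * r) ^ (m - 1) * g r) r := by
  have hu : HasDerivAt (fun r : ℝ => 1 + δ * r) δ r := by
    simpa using ((hasDerivAt_id r).const_mul δ).const_add 1
  have h := ((hu.pow (m + 1)).mul hν.hasDerivAt).add ((hu.pow m).mul hg.hasDerivAt)
  rw [Nat.add_sub_cancel] at h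
  exact h.congr_deriv (by simp only [Pi.pow_apply]; push_cast; ring)

theorem monotoneOn_one_add_mul_pow_mul_add {s : Set ℝ} (hs : Convex ℝ s) (hso : IsOpen s)
    {n : ℕ} (hn : 1 ≤ n) (hδ : 0 ≤ δ) (hu : ∀ r ∈ s, 0 ≤ 1 + δ * r)
    (hν : ∀ r ∈ s, DifferentiableAt ℝ ν r) (hg : ∀ r ∈ s, DifferentiableAt ℝ g r)
    (hgnn : ∀ r ∈ s, 0 ≤ g r)
    (hineq : ∀ r ∈ s, 0 ≤ (1 + δ * r) * deriv ν r + n * δ * ν r + deriv g r) :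
    MonotoneOn (fun r => (1 + δ * r) ^ n * ν r + (1 + δ * r) ^ (n - 1) * g r) s := by
  obtain ⟨m, rfl⟩ := Nat.exists_eq_add_of_le' hn
  have hderiv (r : ℝ) (hr : r ∈ s) :=
    hasDerivAt_one_add_mul_pow_mul_add (δ := δ) m (hν r hr) (hg r hr)
  rw [Nat.add_sub_cancel]
  refine monotoneOn_of_deriv_nonneg hs
    (fun r hr => (hderiv r hr).continuousAt.continuousWithinAt)
    (fun r hr => (hderiv r (interior_subset hr)).differentiableAt.differentiableWithinAt)
    fun r hr => ?_
  rw [hso.interior_eq] at hr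
  have := hu r hr
  have := hgnn r hr
  have := hineq r hr
  rw [(hderiv r hr).deriv]
  push_cast at this
  positivity

theorem tendsto_one_add_mul_pow_nhdsGT_zero (δ : ℝ) (j : ℕ) :
    Tendsto (fun r => (1 + δ * r) ^ j) (𝓝[>] 0) (𝓝 1) := by
  have h : Continuous fun r : ℝ => (1 + δ * r) ^ j := by fun_prop
  simpa using (h.tendsto 0).mono_left nhdsWithin_le_nhds

end OneAddMulPow

theorem stmt9_general (p : ℕ) (hp : 1 ≤ p) (r₀ δ : ℝ) (hr₀ : 0 < r₀) (hδ : 0 < δ)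
    (ν g : ℝ → ℝ)
    (hν : ∀ r ∈ Ioo (0:ℝ) r₀, DifferentiableAt ℝ ν r)
    (hg : ∀ r ∈ Ioo (0:ℝ) r₀, DifferentiableAt ℝ g r)
    (hgnn : ∀ r ∈ Ioo (0:ℝ) r₀, 0 ≤ g r)
    (hg0 : Tendsto g (nhdsWithin 0 (Ioi (0:ℝ))) (nhds 0))
    (hνnn : ∀ r ∈ Ioo (0:ℝ) r₀, 0 ≤ ν r)
    (hineq : ∀ r ∈ Ioo (0:ℝ) r₀,
      0 ≤ (1 + δ * r) * deriv ν r + 4 * p * δ * ν r + deriv g r) :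
    (∃ r₁ > 0, MonotoneOn
      (fun r => (1 + δ * r) ^ (4 * p) * ν r + (1 + δ * r) ^ (4 * p - 1) * g r)
      (Ioo (0:ℝ) r₁)) ∧
    ∃ L : ℝ, Tendsto ν (nhdsWithin 0 (Ioi (0:ℝ))) (nhds L) ∧
      Tendsto (fun r => (1 + δ * r) ^ (4 * p) * ν r)
        (nhdsWithin 0 (Ioi (0:ℝ))) (nhds L) := by
  have hu (r : ℝ) (hr : r ∈ Ioo 0 r₀) : 0 ≤ 1 + δ * r := by nlinarith [hr.1]
  set F : ℝ → ℝ := fun r => (1 + δ * r) ^ (4 * p) * ν r + (1 + δ * r) ^ (4 * p - 1) * g r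
  have hmono : MonotoneOn F (Ioo 0 r₀) :=
    monotoneOn_one_add_mul_pow_mul_add (convex_Ioo 0 r₀) isOpen_Ioo (by omega) hδ.le hu hν hg
      hgnn (by push_cast; exact hineq)
  have hbdd : BddBelow (F '' Ioo 0 r₀) := by
    refine ⟨0, forall_mem_image.2 fun r hr => ?_⟩
    have := hu r hr
    have := hνnn r hr
    have := hgnn r hr
    positivity
  obtain ⟨L, hF⟩ : ∃ L, Tendsto F (𝓝[>] 0) (𝓝 L) :=
    ⟨_, hmono.tendsto_nhdsWithin_Ioo_right (nonempty_Ioo.2 hr₀) hbdd⟩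
  have hweighted : Tendsto (fun r => (1 + δ * r) ^ (4 * p) * ν r) (𝓝[>] 0) (𝓝 L) := by
    simpa [F] using hF.sub ((tendsto_one_add_mul_pow_nhdsGT_zero δ (4 * p - 1)).mul hg0)
  refine ⟨⟨r₀, hr₀, hmono⟩, L, ?_, hweighted⟩
  rw [← tendsto_mul_iff_of_ne_zero (tendsto_one_add_mul_pow_nhdsGT_zero δ (4 * p)) one_ne_zero,
    mul_one]
  simpa only [mul_comm] using hweighted

/-- ODE-comparison lemma: if `ν̄, g` are differentiable on `(0,r₀)`, `g ≥ 0`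
nondecreasing with `g(r) → 0` as `r → 0⁺`, `ν̄ ≥ 0` (bounded below), and
`(1+δr) ν̄'(r) + 4pδ ν̄(r) + g'(r) ≥ 0`, then
`r ↦ (1+δr)^{4p} ν̄(r) + (1+δr)^{4p−1} g(r)` is nondecreasing near `0`, and `ν̄(r)`
has a limit as `r → 0⁺`, equal to `lim_{r→0⁺} (1+δr)^{4p} ν̄(r)`. -/
theorem stmt9 (p : ℕ) (hp : 1 ≤ p) (r₀ δ : ℝ) (hr₀ : 0 < r₀) (hδ : 0 < δ)
    (ν g : ℝ → ℝ)
    (hν : ∀ r ∈ Ioo (0:ℝ) r₀, DifferentiableAt ℝ ν r)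
    (hg : ∀ r ∈ Ioo (0:ℝ) r₀, DifferentiableAt ℝ g r)
    (hgnn : ∀ r ∈ Ioo (0:ℝ) r₀, 0 ≤ g r)
    (hgmono : MonotoneOn g (Ioo (0:ℝ) r₀))
    (hg0 : Tendsto g (nhdsWithin 0 (Ioi (0:ℝ))) (nhds 0))
    (hνnn : ∀ r ∈ Ioo (0:ℝ) r₀, 0 ≤ ν r)
    (hineq : ∀ r ∈ Ioo (0:ℝ) r₀,
      0 ≤ (1 + δ * r) * deriv ν r + 4 * p * δ * ν r + deriv g r) :
    (∃ r₁ > 0, MonotoneOn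
      (fun r => (1 + δ * r) ^ (4 * p) * ν r + (1 + δ * r) ^ (4 * p - 1) * g r)
      (Ioo (0:ℝ) r₁)) ∧
    ∃ L : ℝ, Tendsto ν (nhdsWithin 0 (Ioi (0:ℝ))) (nhds L) ∧
      Tendsto (fun r => (1 + δ * r) ^ (4 * p) * ν r)
        (nhdsWithin 0 (Ioi (0:ℝ))) (nhds L) :=
  stmt9_general p hp r₀ δ hr₀ hδ ν g hν hg hgnn hg0 hνnn hineq
end
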